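/- arXiv:2102.11419 — 7 statements merged into one kernel-verified Lean document; each statement's English description precedes it below -/
import Mathlib

section
/- Let K be a field of characteristic not 2 and let s, s' ∈ K \ {2, -2}. If (s'+2)(s+2) = 16, then under the substitution x ↦ (x+1)/(x-1), y ↦ y/(x-1)³ the equation y² = c(x²+1)(x⁴+sx²+1) transforms into y² = c'(x²+1)(x⁴+s'x²+1) with c' = 2c(s+2); concretely, for all x ≠ 1 one has c'·(((x+1)/(x-1))²+1)·(((x+1)/(x-1))⁴ + s'·((x+1)/(x-1))² + 1) · (x-1)⁶ = 2⁶ · c · (x²+1)(x⁴+sx²+1) · ((s'+2)(s+2)/16). -/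
/-- With `(s'+2)(s+2) = 16` and `c' = 2c(s+2)`, the substitution
`x ↦ (x+1)/(x-1)` transforms `y² = c(x²+1)(x⁴+sx²+1)` into
`y² = c'(x²+1)(x⁴+s'x²+1)`; concretely, for all `x ≠ 1`:
`c'·(((x+1)/(x-1))²+1)·(((x+1)/(x-1))⁴+s'((x+1)/(x-1))²+1)·(x-1)⁶
  = 2⁶·c·(x²+1)(x⁴+sx²+1)·((s'+2)(s+2)/16)`. -/
theorem stmt2 (K : Type*) [Field K] (h2 : (2 : K) ≠ 0)
    (s s' c c' : K) (hs2 : s ≠ 2) (hs2' : s ≠ -2) (hs'2 : s' ≠ 2) (hs'2' : s' ≠ -2)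
    (hrel : (s' + 2) * (s + 2) = 16) (hc : c ≠ 0) (hc' : c' = 2 * c * (s + 2)) :
    ∀ x : K, x ≠ 1 →
      c' * (((x + 1) / (x - 1)) ^ 2 + 1) *
          (((x + 1) / (x - 1)) ^ 4 + s' * ((x + 1) / (x - 1)) ^ 2 + 1) * (x - 1) ^ 6 =
        2 ^ 6 * c * ((x ^ 2 + 1) * (x ^ 4 + s * x ^ 2 + 1)) * ((s' + 2) * (s + 2) / 16) := by
  intro x hx
  have hx1 : x - 1 ≠ 0 := sub_ne_zero.mpr hx
  have h16 : (16 : K) ≠ 0 := by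
    have := pow_ne_zero 4 h2; norm_num at this ⊢; exact this
  have l1 : ((x + 1) / (x - 1)) ^ 2 + 1 = ((x + 1) ^ 2 + (x - 1) ^ 2) / (x - 1) ^ 2 := by
    field_simp
  have l2 : ((x + 1) / (x - 1)) ^ 4 + s' * ((x + 1) / (x - 1)) ^ 2 + 1
      = ((x + 1) ^ 4 + s' * (x + 1) ^ 2 * (x - 1) ^ 2 + (x - 1) ^ 4) / (x - 1) ^ 4 := by
    rw [eq_div_iff (pow_ne_zero 4 hx1)]
    field_simp
  rw [l1, l2]
  have l3 : c' * (((x + 1) ^ 2 + (x - 1) ^ 2) / (x - 1) ^ 2) *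
      (((x + 1) ^ 4 + s' * (x + 1) ^ 2 * (x - 1) ^ 2 + (x - 1) ^ 4) / (x - 1) ^ 4) * (x - 1) ^ 6
      = c' * ((x + 1) ^ 2 + (x - 1) ^ 2) *
        ((x + 1) ^ 4 + s' * (x + 1) ^ 2 * (x - 1) ^ 2 + (x - 1) ^ 4) := by
    field_simp
  rw [l3, hc', hrel, div_self h16, mul_one]
  linear_combination (4 * c * (x ^ 2 + 1) * (x ^ 2 - 1) ^ 2) * hrel
end

section
/- Define the involution s ↦ s' = (-2s+12)/(s+2) on K \ {-2} (char K ≠ 2). Then the function I(s) = -(s-2)²/(4(s+2)) satisfies I(s) = I(s') whenever s ≠ -2 and s' ≠ -2; moreover I(s) = 1 - (s+s')/4. -/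
/-- For `s' = (-2s+12)/(s+2)` with `s ≠ -2` and `s' ≠ -2`, the
invariant `I(s) = -(s-2)²/(4(s+2))` satisfies `I(s) = I(s')` and
`I(s) = 1 - (s+s')/4`. -/
theorem stmt3 (K : Type*) [Field K] (h2 : (2 : K) ≠ 0)
    (s : K) (hs : s ≠ -2) (hs' : (-2 * s + 12) / (s + 2) ≠ -2) :
    (-(s - 2) ^ 2 / (4 * (s + 2)) =
        -((-2 * s + 12) / (s + 2) - 2) ^ 2 / (4 * ((-2 * s + 12) / (s + 2) + 2))) ∧
      -(s - 2) ^ 2 / (4 * (s + 2)) = 1 - (s + (-2 * s + 12) / (s + 2)) / 4 := by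
  have hsum : s + 2 ≠ 0 := fun h => hs (by linear_combination h)
  have h4 : (4 : K) ≠ 0 := by
    intro h; exact h2 (by
      have := mul_self_eq_zero.mp (by linear_combination h : (2:K) * 2 = 0); exact this)
  have hden : (-2 * s + 12) / (s + 2) + 2 ≠ 0 := fun h => hs' (by linear_combination h)
  have e1 : (-2 * s + 12) / (s + 2) + 2 = 16 / (s + 2) := by
    field_simp; ring
  have e2 : (-2 * s + 12) / (s + 2) - 2 = (-4 * s + 8) / (s + 2) := by
    field_simp; ring
  constructor
  · rw [e1, e2]
    rw [div_eq_div_iff (mul_ne_zero h4 hsum) (mul_ne_zero h4 (e1 ▸ hden))]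
    field_simp
    ring
  · field_simp
    ring
end

section
/- Let K be a field of characteristic not 2, let s ∈ K with s ≠ ±2 and s ≠ -6, and set s' = (-2s+12)/(s+2). The rational map (x,y) ↦ (X,Y) with X = (1/(s+2))·(2x+s)(x-1)/(x+1) and Y = (4/(s+2))·(x²+2x+s-1)/(x+1)²·y sends points of E: y² = c(x+1)(x²+sx+1) (with x ≠ -1) to points of E': Y² = c'(X+1)(X²+s'X+1), where c' = 2c(s+2); that is, the identity Y² = c'(X+1)(X²+s'X+1) holds whenever y² = c(x+1)(x²+sx+1) and x ≠ -1. -/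
/-!
The image of `x` is `X = (2x+s)(x-1)/((s+2)(x+1))`, and both factors of the target cubic become
simple over the common denominator `(s+2)(x+1)`: `X + 1` is `2(x²+sx+1)` over it, and
`X² + s'X + 1` is the perfect square of `2(x²+2x+s-1)` over it. The factor `x²+sx+1` of the source
cubic thus reappears in `X + 1`, and the square `(x²+2x+s-1)²` is exactly the one carried by `Y²`.
-/

namespace TwoIsogeny

variable {K : Type*} [Field K]

def imageX (s x : K) : K := (1 / (s + 2)) * ((2 * x + s) * (x - 1) / (x + 1))

variable {s x : K}

theorem imageX_add_one (hs : s + 2 ≠ 0) (hx : x + 1 ≠ 0) :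
    imageX s x + 1 = 2 * (x ^ 2 + s * x + 1) / ((s + 2) * (x + 1)) := by
  unfold imageX
  field_simp
  ring

theorem imageX_sq_add_mul_add_one (hs : s + 2 ≠ 0) (hx : x + 1 ≠ 0) :
    imageX s x ^ 2 + (-2 * s + 12) / (s + 2) * imageX s x + 1 =
      (2 * (x ^ 2 + 2 * x + s - 1) / ((s + 2) * (x + 1))) ^ 2 := by
  unfold imageX
  field_simp
  ring

end TwoIsogeny

open TwoIsogeny in
theorem stmt6_general (K : Type*) [Field K]
    (c s : K) (hs2' : s ≠ -2)
    (x y : K) (hx : x ≠ -1)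
    (h : y ^ 2 = c * (x + 1) * (x ^ 2 + s * x + 1)) :
    ((4 / (s + 2)) * ((x ^ 2 + 2 * x + s - 1) / (x + 1) ^ 2) * y) ^ 2 =
      (2 * c * (s + 2)) *
        ((1 / (s + 2)) * ((2 * x + s) * (x - 1) / (x + 1)) + 1) *
        (((1 / (s + 2)) * ((2 * x + s) * (x - 1) / (x + 1))) ^ 2 +
          ((-2 * s + 12) / (s + 2)) * ((1 / (s + 2)) * ((2 * x + s) * (x - 1) / (x + 1))) + 1) := by
  have hs : s + 2 ≠ 0 := fun h0 => hs2' (eq_neg_of_add_eq_zero_left h0)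
  have hx1 : x + 1 ≠ 0 := fun h0 => hx (eq_neg_of_add_eq_zero_left h0)
  change _ = _ * (imageX s x + 1) * (imageX s x ^ 2 + _ * imageX s x + 1)
  rw [imageX_add_one hs hx1, imageX_sq_add_mul_add_one hs hx1, mul_pow, h]
  field_simp
  ring

/-- The explicit 2-isogeny `E → E'`: with `s' = (-2s+12)/(s+2)`,
`c' = 2c(s+2)`, `X = (1/(s+2))·(2x+s)(x-1)/(x+1)`, and
`Y = (4/(s+2))·(x²+2x+s-1)/(x+1)²·y`, if `y² = c(x+1)(x²+sx+1)` and `x ≠ -1`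
then `Y² = c'(X+1)(X²+s'X+1)`. -/
theorem stmt6 (K : Type*) [Field K] (h2 : (2 : K) ≠ 0)
    (c s : K) (hc : c ≠ 0) (hs2 : s ≠ 2) (hs2' : s ≠ -2) (hs6 : s ≠ -6)
    (x y : K) (hx : x ≠ -1)
    (h : y ^ 2 = c * (x + 1) * (x ^ 2 + s * x + 1)) :
    ((4 / (s + 2)) * ((x ^ 2 + 2 * x + s - 1) / (x + 1) ^ 2) * y) ^ 2 =
      (2 * c * (s + 2)) *
        ((1 / (s + 2)) * ((2 * x + s) * (x - 1) / (x + 1)) + 1) *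
        (((1 / (s + 2)) * ((2 * x + s) * (x - 1) / (x + 1))) ^ 2 +
          ((-2 * s + 12) / (s + 2)) * ((1 / (s + 2)) * ((2 * x + s) * (x - 1) / (x + 1))) + 1) :=
  stmt6_general K c s hs2' x y hx h
end

section
/- Let D₄ act on the set of 2-element subsets of R = {ζ, -ζ, t, -t, 1/t, -1/t} (with ζ² = -1, t⁴ ≠ 1, t ≠ 0, all six elements distinct) via σ({u,v}) = {-u,-v} and τ({u,v}) = {1/u, 1/v}. Then the 15 two-element subsets decompose into exactly 6 orbits, of sizes 1, 2, 2, 2, 4, 4: namely {{ζ,-ζ}}; {{t,-t},{1/t,-1/t}}; {{-t,-1/t},{t,1/t}}; {{t,-1/t},{-t,1/t}}; {{ζ,1/t},{ζ,-t},{-ζ,-1/t},{-ζ,t}}; and {{ζ,t},{ζ,-1/t},{-ζ,-t},{-ζ,1/t}}. -/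
private theorem fpair_iff {α : Type*} [DecidableEq α] {a b c d : α} :
    ({a,b} : Finset α) = {c,d} ↔ a = c ∧ b = d ∨ a = d ∧ b = c := by
  rw [← Finset.coe_inj]
  simp only [Finset.coe_insert, Finset.coe_singleton]
  exact Set.pair_eq_pair_iff

set_option maxHeartbeats 1000000 in

/-- `D₄` acts on the 2-element subsets of
`R = {ζ, -ζ, t, -t, 1/t, -1/t}` via `σ({u,v}) = {-u,-v}` and
`τ({u,v}) = {1/u,1/v}`.  The 15 two-element subsets of `R` decompose into
exactly 6 orbits, of sizes 1, 2, 2, 2, 4, 4, as listed. -/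
theorem stmt11 {K : Type*} [Field K] [DecidableEq K] (h2 : (2 : K) ≠ 0)
    (ζ t : K) (hζ : ζ ^ 2 = -1) (ht : t ≠ 0) (ht4 : t ^ 4 ≠ 1)
    (sAct tAct : Finset K → Finset K)
    (hs : ∀ S, sAct S = S.image fun u => -u)
    (htau : ∀ S, tAct S = S.image fun u => u⁻¹)
    (R : Finset K) (hR : R = {ζ, -ζ, t, -t, t⁻¹, -t⁻¹})
    (orbs : List (Set (Finset K)))
    (horbs : orbs =
      [ {({ζ, -ζ} : Finset K)},
        {({t, -t} : Finset K), ({t⁻¹, -t⁻¹} : Finset K)},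
        {({-t, -t⁻¹} : Finset K), ({t, t⁻¹} : Finset K)},
        {({t, -t⁻¹} : Finset K), ({-t, t⁻¹} : Finset K)},
        {({ζ, t⁻¹} : Finset K), ({ζ, -t} : Finset K),
          ({-ζ, -t⁻¹} : Finset K), ({-ζ, t} : Finset K)},
        {({ζ, t} : Finset K), ({ζ, -t⁻¹} : Finset K),
          ({-ζ, -t} : Finset K), ({-ζ, t⁻¹} : Finset K)} ]) :
    -- the orbits cover exactly the 2-element subsets of R
    (∀ S : Finset K, (S ⊆ R ∧ S.card = 2) ↔ ∃ O ∈ orbs, S ∈ O) ∧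
    -- the orbits are pairwise disjoint
    List.Pairwise Disjoint orbs ∧
    -- their sizes are 1, 2, 2, 2, 4, 4
    orbs.map Set.ncard = [1, 2, 2, 2, 4, 4] ∧
    -- each is invariant under σ and τ
    (∀ O ∈ orbs, ∀ S ∈ O, sAct S ∈ O ∧ tAct S ∈ O) ∧
    -- each is a single orbit: it has no proper nonempty invariant subset
    (∀ O ∈ orbs, ∀ A : Set (Finset K), A ⊆ O → A.Nonempty →
      (∀ S ∈ A, sAct S ∈ A ∧ tAct S ∈ A) → A = O) := by
  have hz0 : ζ ≠ 0 := by
    intro h; rw [h] at hζ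
    have h1 : (1:K) = 0 := by linear_combination hζ
    exact one_ne_zero h1
  have hz4 : ζ ^ 4 = 1 := by
    have : ζ ^ 4 = (ζ ^ 2) ^ 2 := by ring
    rw [this, hζ]; ring
  have hzinv : ζ⁻¹ = -ζ := by
    apply inv_eq_of_mul_eq_one_right
    have : ζ * -ζ = -(ζ^2) := by ring
    rw [this, hζ]; ring
  have hnzinv : (-ζ)⁻¹ = ζ := by rw [inv_neg, hzinv, neg_neg]
  have n1 : ζ ≠ t := fun h => ht4 (by rw [← h, hz4])
  have n2 : ζ ≠ -t := fun h => ht4 (by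
    have : t = -ζ := by rw [h]; ring
    rw [this]; calc (-ζ)^4 = ζ^4 := by ring
      _ = 1 := hz4)
  have n3 : ζ ≠ t⁻¹ := fun h => ht4 (by
    have htz : t = ζ⁻¹ := by rw [h, inv_inv]
    rw [htz, inv_pow, hz4, inv_one])
  have n4 : ζ ≠ -t⁻¹ := fun h => ht4 (by
    have htz : t = -ζ⁻¹ := by rw [h, inv_neg, inv_inv, neg_neg]
    rw [htz]
    calc (-ζ⁻¹)^4 = (ζ⁻¹)^4 := by ring
      _ = (ζ^4)⁻¹ := by rw [inv_pow]
      _ = 1 := by rw [hz4, inv_one])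
  have n5 : -ζ ≠ t := fun h => n2 (by rw [← h]; ring)
  have n6 : -ζ ≠ -t := fun h => n1 (by
    have := neg_injective h; rw [this])
  have n7 : -ζ ≠ t⁻¹ := fun h => n4 (by rw [← h]; ring)
  have n8 : -ζ ≠ -t⁻¹ := fun h => n3 (neg_injective h ▸ rfl)
  have n9 : ζ ≠ -ζ := fun h => by
    have : (2:K) * ζ = 0 := by linear_combination h
    rcases mul_eq_zero.mp this with h'|h'
    · exact h2 h'
    · exact hz0 h'
  have m1 : t ≠ -t := fun h => by
    have : (2:K) * t = 0 := by linear_combination h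
    rcases mul_eq_zero.mp this with h'|h'
    · exact h2 h'
    · exact ht h'
  have m2 : t ≠ t⁻¹ := fun h => ht4 (by
    have h2' : t^2 = 1 := by
      rw [pow_two]; nth_rewrite 2 [h]; exact mul_inv_cancel₀ ht
    calc t^4 = (t^2)^2 := by ring
      _ = 1 := by rw [h2']; ring)
  have m3 : t ≠ -t⁻¹ := fun h => ht4 (by
    have h2' : t^2 = -1 := by
      rw [pow_two]; nth_rewrite 2 [h]
      rw [mul_neg, mul_inv_cancel₀ ht]
    calc t^4 = (t^2)^2 := by ring
      _ = 1 := by rw [h2']; ring)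
  have m4 : -t ≠ t⁻¹ := fun h => m3 (by rw [← h]; ring)
  have m5 : -t ≠ -t⁻¹ := fun h => m2 (neg_injective h)
  have m6 : t⁻¹ ≠ -t⁻¹ := fun h => by
    have hti : t⁻¹ ≠ 0 := inv_ne_zero ht
    have : (2:K) * t⁻¹ = 0 := by linear_combination h
    rcases mul_eq_zero.mp this with h'|h'
    · exact h2 h'
    · exact hti h'
  have n1s := Ne.symm n1
  have n2s := Ne.symm n2
  have n3s := Ne.symm n3
  have n4s := Ne.symm n4
  have n5s := Ne.symm n5
  have n6s := Ne.symm n6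
  have n7s := Ne.symm n7
  have n8s := Ne.symm n8
  have n9s := Ne.symm n9
  have m1s := Ne.symm m1
  have m2s := Ne.symm m2
  have m3s := Ne.symm m3
  have m4s := Ne.symm m4
  have m5s := Ne.symm m5
  have m6s := Ne.symm m6
  subst hR horbs
  have acts : ∀ a b : K, sAct ({a,b} : Finset K) = {-a,-b} := by
    intro a b; rw [hs]; simp
  have actt : ∀ a b : K, tAct ({a,b} : Finset K) = {a⁻¹,b⁻¹} := by
    intro a b; rw [htau]; simp
  have sstep : ∀ (A : Set (Finset K)), (∀ S ∈ A, sAct S ∈ A ∧ tAct S ∈ A) →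
      ∀ a b : K, ({a,b} : Finset K) ∈ A → ({-a,-b} : Finset K) ∈ A := by
    intro A hA a b h
    have := (hA _ h).1
    rwa [acts] at this
  have tstep : ∀ (A : Set (Finset K)), (∀ S ∈ A, sAct S ∈ A ∧ tAct S ∈ A) →
      ∀ a b : K, ({a,b} : Finset K) ∈ A → ({a⁻¹,b⁻¹} : Finset K) ∈ A := by
    intro A hA a b h
    have := (hA _ h).2
    rwa [actt] at this
  refine ⟨?_, ?_, ?_, ?_, ?_⟩
  · intro S
    constructor
    · rintro ⟨hsub, hcard⟩
      obtain ⟨a, b, hab, rfl⟩ := Finset.card_eq_two.mp hcard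
      have ha : a ∈ ({ζ, -ζ, t, -t, t⁻¹, -t⁻¹} : Finset K) := hsub (by simp)
      have hb : b ∈ ({ζ, -ζ, t, -t, t⁻¹, -t⁻¹} : Finset K) := hsub (by simp)
      simp only [Finset.mem_insert, Finset.mem_singleton] at ha hb
      rcases ha with rfl|rfl|rfl|rfl|rfl|rfl <;>
        rcases hb with rfl|rfl|rfl|rfl|rfl|rfl <;>
        first
          | exact absurd rfl hab
          | simp [fpair_iff, hzinv, hnzinv, hs, htau, Finset.image_insert, Finset.image_singleton, n1, n2, n3, n4, n5, n6, n7, n8, n9, m1, m2, m3, m4, m5, m6, n1s, n2s, n3s, n4s, n5s, n6s, n7s, n8s, n9s, m1s, m2s, m3s, m4s, m5s, m6s, inv_neg, inv_inv, neg_neg]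
    · rintro ⟨O, hO, hSO⟩
      simp only [List.mem_cons, List.not_mem_nil, or_false] at hO
      rcases hO with rfl|rfl|rfl|rfl|rfl|rfl <;>
        simp only [Set.mem_insert_iff, Set.mem_singleton_iff] at hSO <;>
        (try casesm* _ ∨ _) <;> subst_vars <;>
        exact ⟨by simp [Finset.insert_subset_iff],
          Finset.card_pair (by first | assumption | (apply Ne.symm; assumption))⟩
  · refine .cons ?_ (.cons ?_ (.cons ?_ (.cons ?_ (.cons ?_ (.cons ?_ .nil))))) <;>
      (intro O hO
       simp only [List.mem_cons, List.not_mem_nil, or_false] at hO) <;>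
      (try casesm* _ ∨ _) <;> subst_vars <;>
      (rw [Set.disjoint_left]
       intro S hS hT
       simp only [Set.mem_insert_iff, Set.mem_singleton_iff] at hS hT) <;>
      (try casesm* _ ∨ _) <;> subst_vars <;>
      simp only [ne_eq, not_false_iff, or_self, false_or, or_false, false_and, and_false, and_self, fpair_iff, hzinv, hnzinv, hs, htau, Finset.image_insert, Finset.image_singleton, n1, n2, n3, n4, n5, n6, n7, n8, n9, m1, m2, m3, m4, m5, m6, n1s, n2s, n3s, n4s, n5s, n6s, n7s, n8s, n9s, m1s, m2s, m3s, m4s, m5s, m6s, inv_neg, inv_inv, neg_neg] at *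
  · simp only [List.map_cons, List.map_nil, List.cons.injEq, and_true]
    refine ⟨?_, ?_, ?_, ?_, ?_, ?_⟩
    · exact Set.ncard_singleton _
    · exact Set.ncard_pair (by simp [fpair_iff, hzinv, hnzinv, n1, n2, n3, n4, n5, n6, n7, n8, n9, m1, m2, m3, m4, m5, m6, n1s, n2s, n3s, n4s, n5s, n6s, n7s, n8s, n9s, m1s, m2s, m3s, m4s, m5s, m6s, inv_neg, inv_inv, neg_neg])
    · exact Set.ncard_pair (by simp [fpair_iff, hzinv, hnzinv, n1, n2, n3, n4, n5, n6, n7, n8, n9, m1, m2, m3, m4, m5, m6, n1s, n2s, n3s, n4s, n5s, n6s, n7s, n8s, n9s, m1s, m2s, m3s, m4s, m5s, m6s, inv_neg, inv_inv, neg_neg])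
    · exact Set.ncard_pair (by simp [fpair_iff, hzinv, hnzinv, n1, n2, n3, n4, n5, n6, n7, n8, n9, m1, m2, m3, m4, m5, m6, n1s, n2s, n3s, n4s, n5s, n6s, n7s, n8s, n9s, m1s, m2s, m3s, m4s, m5s, m6s, inv_neg, inv_inv, neg_neg])
    · rw [Set.ncard_insert_of_notMem (by simp [fpair_iff, hzinv, hnzinv, n1, n2, n3, n4, n5, n6, n7, n8, n9, m1, m2, m3, m4, m5, m6, n1s, n2s, n3s, n4s, n5s, n6s, n7s, n8s, n9s, m1s, m2s, m3s, m4s, m5s, m6s, inv_neg, inv_inv, neg_neg]), Set.ncard_insert_of_notMem (by simp [fpair_iff, hzinv, hnzinv, n1, n2, n3, n4, n5, n6, n7, n8, n9, m1, m2, m3, m4, m5, m6, n1s, n2s, n3s, n4s, n5s, n6s, n7s, n8s, n9s, m1s, m2s, m3s, m4s, m5s, m6s, inv_neg, inv_inv, neg_neg]),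
        Set.ncard_pair (by simp [fpair_iff, hzinv, hnzinv, n1, n2, n3, n4, n5, n6, n7, n8, n9, m1, m2, m3, m4, m5, m6, n1s, n2s, n3s, n4s, n5s, n6s, n7s, n8s, n9s, m1s, m2s, m3s, m4s, m5s, m6s, inv_neg, inv_inv, neg_neg])]
    · rw [Set.ncard_insert_of_notMem (by simp [fpair_iff, hzinv, hnzinv, n1, n2, n3, n4, n5, n6, n7, n8, n9, m1, m2, m3, m4, m5, m6, n1s, n2s, n3s, n4s, n5s, n6s, n7s, n8s, n9s, m1s, m2s, m3s, m4s, m5s, m6s, inv_neg, inv_inv, neg_neg]), Set.ncard_insert_of_notMem (by simp [fpair_iff, hzinv, hnzinv, n1, n2, n3, n4, n5, n6, n7, n8, n9, m1, m2, m3, m4, m5, m6, n1s, n2s, n3s, n4s, n5s, n6s, n7s, n8s, n9s, m1s, m2s, m3s, m4s, m5s, m6s, inv_neg, inv_inv, neg_neg]),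
        Set.ncard_pair (by simp [fpair_iff, hzinv, hnzinv, n1, n2, n3, n4, n5, n6, n7, n8, n9, m1, m2, m3, m4, m5, m6, n1s, n2s, n3s, n4s, n5s, n6s, n7s, n8s, n9s, m1s, m2s, m3s, m4s, m5s, m6s, inv_neg, inv_inv, neg_neg])]
  · intro O hO
    simp only [List.mem_cons, List.not_mem_nil, or_false] at hO
    (try casesm* _ ∨ _) <;> subst_vars <;>
      (intro S hS
       simp only [Set.mem_insert_iff, Set.mem_singleton_iff] at hS) <;>
      (try casesm* _ ∨ _) <;> subst_vars <;>
      (constructor <;> simp [fpair_iff, hzinv, hnzinv, hs, htau, Finset.image_insert, Finset.image_singleton, n1, n2, n3, n4, n5, n6, n7, n8, n9, m1, m2, m3, m4, m5, m6, n1s, n2s, n3s, n4s, n5s, n6s, n7s, n8s, n9s, m1s, m2s, m3s, m4s, m5s, m6s, inv_neg, inv_inv, neg_neg])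
  · intro O hO A hAO hAne hAinv
    simp only [List.mem_cons, List.not_mem_nil, or_false] at hO
    obtain ⟨S, hSA⟩ := hAne
    have hSO := hAO hSA
    apply Set.Subset.antisymm hAO
    rcases hO with rfl|rfl|rfl|rfl|rfl|rfl <;>
      simp only [Set.mem_insert_iff, Set.mem_singleton_iff] at hSO
    · subst hSO
      intro T hT
      simp only [Set.mem_insert_iff, Set.mem_singleton_iff] at hT
      subst hT
      exact hSA
    · rcases hSO with rfl|rfl
      · have hY := tstep A hAinv t (-t) hSA
        simp only [hzinv, hnzinv, inv_neg, inv_inv, neg_neg] at hY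
        intro T hT
        simp only [Set.mem_insert_iff, Set.mem_singleton_iff] at hT
        rcases hT with rfl|rfl <;> assumption
      · have hX := tstep A hAinv t⁻¹ (-t⁻¹) hSA
        simp only [hzinv, hnzinv, inv_neg, inv_inv, neg_neg] at hX
        intro T hT
        simp only [Set.mem_insert_iff, Set.mem_singleton_iff] at hT
        rcases hT with rfl|rfl <;> assumption
    · rcases hSO with rfl|rfl
      · have hY := sstep A hAinv (-t) (-t⁻¹) hSA
        simp only [hzinv, hnzinv, inv_neg, inv_inv, neg_neg] at hY
        intro T hT
        simp only [Set.mem_insert_iff, Set.mem_singleton_iff] at hT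
        rcases hT with rfl|rfl <;> assumption
      · have hX := sstep A hAinv t t⁻¹ hSA
        intro T hT
        simp only [Set.mem_insert_iff, Set.mem_singleton_iff] at hT
        rcases hT with rfl|rfl <;> assumption
    · rcases hSO with rfl|rfl
      · have hY := sstep A hAinv t (-t⁻¹) hSA
        simp only [hzinv, hnzinv, inv_neg, inv_inv, neg_neg] at hY
        intro T hT
        simp only [Set.mem_insert_iff, Set.mem_singleton_iff] at hT
        rcases hT with rfl|rfl <;> assumption
      · have hX := sstep A hAinv (-t) t⁻¹ hSA
        simp only [hzinv, hnzinv, inv_neg, inv_inv, neg_neg] at hX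
        intro T hT
        simp only [Set.mem_insert_iff, Set.mem_singleton_iff] at hT
        rcases hT with rfl|rfl <;> assumption
    · rcases hSO with rfl|rfl|rfl|rfl
      · have h3 := sstep A hAinv ζ t⁻¹ hSA
        have h4 := tstep A hAinv ζ t⁻¹ hSA
        simp only [hzinv, hnzinv, inv_neg, inv_inv, neg_neg] at h4
        have hp2 := sstep A hAinv (-ζ) t h4
        simp only [hzinv, hnzinv, inv_neg, inv_inv, neg_neg] at hp2
        intro T hT
        simp only [Set.mem_insert_iff, Set.mem_singleton_iff] at hT
        rcases hT with rfl|rfl|rfl|rfl <;> assumption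
      · have h4 := sstep A hAinv ζ (-t) hSA
        simp only [hzinv, hnzinv, inv_neg, inv_inv, neg_neg] at h4
        have h3 := tstep A hAinv ζ (-t) hSA
        simp only [hzinv, hnzinv, inv_neg, inv_inv, neg_neg] at h3
        have h1 := tstep A hAinv (-ζ) t h4
        simp only [hzinv, hnzinv, inv_neg, inv_inv, neg_neg] at h1
        intro T hT
        simp only [Set.mem_insert_iff, Set.mem_singleton_iff] at hT
        rcases hT with rfl|rfl|rfl|rfl <;> assumption
      · have h1 := sstep A hAinv (-ζ) (-t⁻¹) hSA
        simp only [hzinv, hnzinv, inv_neg, inv_inv, neg_neg] at h1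
        have hp2 := tstep A hAinv (-ζ) (-t⁻¹) hSA
        simp only [hzinv, hnzinv, inv_neg, inv_inv, neg_neg] at hp2
        have h4 := tstep A hAinv ζ t⁻¹ h1
        simp only [hzinv, hnzinv, inv_neg, inv_inv, neg_neg] at h4
        intro T hT
        simp only [Set.mem_insert_iff, Set.mem_singleton_iff] at hT
        rcases hT with rfl|rfl|rfl|rfl <;> assumption
      · have hp2 := sstep A hAinv (-ζ) t hSA
        simp only [hzinv, hnzinv, inv_neg, inv_inv, neg_neg] at hp2
        have h1 := tstep A hAinv (-ζ) t hSA
        simp only [hzinv, hnzinv, inv_neg, inv_inv, neg_neg] at h1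
        have h3 := sstep A hAinv ζ t⁻¹ h1
        intro T hT
        simp only [Set.mem_insert_iff, Set.mem_singleton_iff] at hT
        rcases hT with rfl|rfl|rfl|rfl <;> assumption
    · rcases hSO with rfl|rfl|rfl|rfl
      · have h3 := sstep A hAinv ζ t hSA
        have h4 := tstep A hAinv ζ t hSA
        simp only [hzinv, hnzinv, inv_neg, inv_inv, neg_neg] at h4
        have hp2 := sstep A hAinv (-ζ) t⁻¹ h4
        simp only [hzinv, hnzinv, inv_neg, inv_inv, neg_neg] at hp2
        intro T hT
        simp only [Set.mem_insert_iff, Set.mem_singleton_iff] at hT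
        rcases hT with rfl|rfl|rfl|rfl <;> assumption
      · have h4 := sstep A hAinv ζ (-t⁻¹) hSA
        simp only [hzinv, hnzinv, inv_neg, inv_inv, neg_neg] at h4
        have h3 := tstep A hAinv ζ (-t⁻¹) hSA
        simp only [hzinv, hnzinv, inv_neg, inv_inv, neg_neg] at h3
        have h1 := tstep A hAinv (-ζ) t⁻¹ h4
        simp only [hzinv, hnzinv, inv_neg, inv_inv, neg_neg] at h1
        intro T hT
        simp only [Set.mem_insert_iff, Set.mem_singleton_iff] at hT
        rcases hT with rfl|rfl|rfl|rfl <;> assumption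
      · have h1 := sstep A hAinv (-ζ) (-t) hSA
        simp only [hzinv, hnzinv, inv_neg, inv_inv, neg_neg] at h1
        have hp2 := tstep A hAinv (-ζ) (-t) hSA
        simp only [hzinv, hnzinv, inv_neg, inv_inv, neg_neg] at hp2
        have h4 := tstep A hAinv ζ t h1
        simp only [hzinv, hnzinv, inv_neg, inv_inv, neg_neg] at h4
        intro T hT
        simp only [Set.mem_insert_iff, Set.mem_singleton_iff] at hT
        rcases hT with rfl|rfl|rfl|rfl <;> assumption
      · have hp2 := sstep A hAinv (-ζ) t⁻¹ hSA
        simp only [hzinv, hnzinv, inv_neg, inv_inv, neg_neg] at hp2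
        have h1 := tstep A hAinv (-ζ) t⁻¹ hSA
        simp only [hzinv, hnzinv, inv_neg, inv_inv, neg_neg] at h1
        have h3 := sstep A hAinv ζ t h1
        intro T hT
        simp only [Set.mem_insert_iff, Set.mem_singleton_iff] at hT
        rcases hT with rfl|rfl|rfl|rfl <;> assumption
end

section
/- Let u₁, u₂ be elements of a field K of characteristic not 2, with u₁, u₂ ≠ 0, uᵢ² ≠ -1, and set I₁ = (u₁+1/u₁)², I₂ = (u₂+1/u₂)². Then I₁²I₂ + I₁I₂² - 3I₁I₂ + 1 = 0 if and only if (u₁²+u₂²+1)(u₁²u₂²+u₁²+1)(u₁²u₂²+u₂²+1)(u₁²u₂²+u₁²+u₂²) = 0. Equivalently, as polynomials in u₁,u₂: u₁⁴u₂⁴·(I₁²I₂ + I₁I₂² - 3I₁I₂ + 1) = (u₁²+u₂²+1)(u₁²u₂²+u₁²+1)(u₁²u₂²+u₂²+1)(u₁²u₂²+u₁²+u₂²). -/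
/-- With `Iᵢ = (uᵢ + 1/uᵢ)²`, one has
`I₁²I₂ + I₁I₂² - 3I₁I₂ + 1 = 0` iff
`(u₁²+u₂²+1)(u₁²u₂²+u₁²+1)(u₁²u₂²+u₂²+1)(u₁²u₂²+u₁²+u₂²) = 0`; and as an
identity, `u₁⁴u₂⁴·(I₁²I₂ + I₁I₂² - 3I₁I₂ + 1)` equals the displayed product. -/
theorem stmt15 {K : Type*} [Field K] (h2 : (2 : K) ≠ 0)
    (u₁ u₂ : K) (h1 : u₁ ≠ 0) (h2' : u₂ ≠ 0)
    (h1' : u₁ ^ 2 ≠ -1) (h2'' : u₂ ^ 2 ≠ -1)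
    (I₁ I₂ : K) (hI₁ : I₁ = (u₁ + 1 / u₁) ^ 2) (hI₂ : I₂ = (u₂ + 1 / u₂) ^ 2) :
    (I₁ ^ 2 * I₂ + I₁ * I₂ ^ 2 - 3 * (I₁ * I₂) + 1 = 0 ↔
        (u₁ ^ 2 + u₂ ^ 2 + 1) * (u₁ ^ 2 * u₂ ^ 2 + u₁ ^ 2 + 1) *
            (u₁ ^ 2 * u₂ ^ 2 + u₂ ^ 2 + 1) * (u₁ ^ 2 * u₂ ^ 2 + u₁ ^ 2 + u₂ ^ 2) = 0) ∧
      u₁ ^ 4 * u₂ ^ 4 * (I₁ ^ 2 * I₂ + I₁ * I₂ ^ 2 - 3 * (I₁ * I₂) + 1) =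
        (u₁ ^ 2 + u₂ ^ 2 + 1) * (u₁ ^ 2 * u₂ ^ 2 + u₁ ^ 2 + 1) *
          (u₁ ^ 2 * u₂ ^ 2 + u₂ ^ 2 + 1) * (u₁ ^ 2 * u₂ ^ 2 + u₁ ^ 2 + u₂ ^ 2) := by
  have key : u₁ ^ 4 * u₂ ^ 4 * (I₁ ^ 2 * I₂ + I₁ * I₂ ^ 2 - 3 * (I₁ * I₂) + 1) =
      (u₁ ^ 2 + u₂ ^ 2 + 1) * (u₁ ^ 2 * u₂ ^ 2 + u₁ ^ 2 + 1) *
        (u₁ ^ 2 * u₂ ^ 2 + u₂ ^ 2 + 1) * (u₁ ^ 2 * u₂ ^ 2 + u₁ ^ 2 + u₂ ^ 2) := by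
    have k1 : u₁ ^ 2 * I₁ = (u₁ ^ 2 + 1) ^ 2 := by
      rw [hI₁, ← mul_pow, mul_add, mul_one_div, div_self h1]; ring
    have k2 : u₂ ^ 2 * I₂ = (u₂ ^ 2 + 1) ^ 2 := by
      rw [hI₂, ← mul_pow, mul_add, mul_one_div, div_self h2']; ring
    calc u₁ ^ 4 * u₂ ^ 4 * (I₁ ^ 2 * I₂ + I₁ * I₂ ^ 2 - 3 * (I₁ * I₂) + 1)
        = (u₁ ^ 2 * I₁) ^ 2 * (u₂ ^ 2 * I₂) * u₂ ^ 2 +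
            (u₁ ^ 2 * I₁) * (u₂ ^ 2 * I₂) ^ 2 * u₁ ^ 2 -
            3 * ((u₁ ^ 2 * I₁) * (u₂ ^ 2 * I₂)) * (u₁ ^ 2 * u₂ ^ 2) +
            u₁ ^ 4 * u₂ ^ 4 := by ring
      _ = _ := by rw [k1, k2]; ring
  refine ⟨?_, key⟩
  constructor
  · intro h
    rw [← key, h, mul_zero]
  · intro h
    have h4 : u₁ ^ 4 * u₂ ^ 4 ≠ 0 := mul_ne_zero (pow_ne_zero _ h1) (pow_ne_zero _ h2')
    have := key.trans h
    exact (mul_eq_zero.mp this).resolve_left h4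
end

section
/- Let K be a field of characteristic not 2 with ζ ∈ K, ζ² = -1, and suppose 2 and -7 are squares in K with fixed square roots. For t₁ = (1+ζ)(3+ζ√(-7))/2 and t₂ = (-1+ζ)(3+ζ√(-7))/2, the corresponding values sᵢ = -(tᵢ⁴+1)/tᵢ² satisfy s₁ = 6√(-7) and s₂ = -6√(-7); in particular s₁ + s₂ = 0 and s₁·s₂ = 252, so (using I(s) = -(s-2)²/(4(s+2))) the invariants I₁ = I(s₁), I₂ = I(s₂) are the two roots of x² - (47/16)x + 16: I₁ + I₂ = 47/16 and I₁·I₂ = 16. -/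
/-!
Since `-1 + ζ = ζ (1 + ζ)`, we have `t₂ = ζ t₁`, so `t₂² = -t₁²` and `s₂ = -s₁`. Squaring gives
`t₁² = 8ζ - 3√-7`, whose inverse is `-(8ζ + 3√-7)`; hence `s₁ = -(t₁² + t₁⁻²) = 6√-7`.
The sum and product of `I(s)` and `I(-s)` are rational functions of `s²` alone, and `s₁² = -252`.
-/

namespace GenusTwoD4

variable {K : Type*} [Field K]

/-- The invariant `I(s)` of the curve `y² = c (x² + 1)(x⁴ + s x² + 1)`. -/
def invariant (s : K) : K := -(s - 2) ^ 2 / (4 * (s + 2))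

theorem neg_pow_four_add_one_div_sq {t v : K} (h : t ^ 2 * v = -1) :
    -(t ^ 4 + 1) / t ^ 2 = v - t ^ 2 := by
  have ht : t ^ 2 ≠ 0 := left_ne_zero_of_mul (h ▸ neg_ne_zero.mpr one_ne_zero)
  rw [div_eq_iff ht]
  linear_combination -h

theorem one_add_mul_three_add_div_two_sq {ζ r7 : K} (h2 : (2 : K) ≠ 0) (hζ : ζ ^ 2 = -1)
    (hr7 : r7 ^ 2 = -7) : ((1 + ζ) * (3 + ζ * r7) / 2) ^ 2 = 8 * ζ - 3 * r7 := by
  rw [div_pow, div_eq_iff (pow_ne_zero 2 h2)]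
  linear_combination (12 * r7 - 14 * ζ + (3 + ζ * r7) ^ 2) * hζ + 2 * ζ ^ 3 * hr7

section

variable {s : K} (hs : 4 - s ^ 2 ≠ 0)
include hs

theorem add_two_ne_zero_of_four_sub_sq_ne_zero : s + 2 ≠ 0 :=
  fun h => hs (by linear_combination (2 - s) * h)

variable (h2 : (2 : K) ≠ 0)
include h2

theorem invariant_add_invariant_neg :
    invariant s + invariant (-s) = -(3 * s ^ 2 + 4) / (4 - s ^ 2) := by
  have hplus := add_two_ne_zero_of_four_sub_sq_ne_zero hs
  have hminus := add_two_ne_zero_of_four_sub_sq_ne_zero (s := -s) (by rwa [neg_sq])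
  have h4 : (4 : K) ≠ 0 := by rw [show (4 : K) = 2 ^ 2 by norm_num]; exact pow_ne_zero 2 h2
  unfold invariant
  field_simp
  ring

theorem invariant_mul_invariant_neg :
    invariant s * invariant (-s) = (4 - s ^ 2) / 16 := by
  have hplus := add_two_ne_zero_of_four_sub_sq_ne_zero hs
  have hminus := add_two_ne_zero_of_four_sub_sq_ne_zero (s := -s) (by rwa [neg_sq])
  have h4 : (4 : K) ≠ 0 := by rw [show (4 : K) = 2 ^ 2 by norm_num]; exact pow_ne_zero 2 h2
  rw [eq_div_iff (by rw [show (16 : K) = 4 * 4 by norm_num]; exact mul_ne_zero h4 h4)]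
  unfold invariant
  field_simp
  ring

end

end GenusTwoD4

open GenusTwoD4

theorem stmt18_general {K : Type*} [Field K] (h2 : (2 : K) ≠ 0)
    (ζ r7 : K) (hζ : ζ ^ 2 = -1) (hr7 : r7 ^ 2 = -7)
    (t₁ t₂ : K)
    (ht₁ : t₁ = (1 + ζ) * (3 + ζ * r7) / 2)
    (ht₂ : t₂ = (-1 + ζ) * (3 + ζ * r7) / 2)
    (s₁ s₂ : K)
    (hs₁ : s₁ = -(t₁ ^ 4 + 1) / t₁ ^ 2) (hs₂ : s₂ = -(t₂ ^ 4 + 1) / t₂ ^ 2)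
    (I₁ I₂ : K)
    (hI₁ : I₁ = -(s₁ - 2) ^ 2 / (4 * (s₁ + 2)))
    (hI₂ : I₂ = -(s₂ - 2) ^ 2 / (4 * (s₂ + 2))) :
    s₁ = 6 * r7 ∧ s₂ = -6 * r7 ∧ s₁ + s₂ = 0 ∧ s₁ * s₂ = 252 ∧
      I₁ + I₂ = 47 / 16 ∧ I₁ * I₂ = 16 := by
  have h16 : (16 : K) ≠ 0 := by rw [show (16 : K) = 2 ^ 4 by norm_num]; exact pow_ne_zero 4 h2
  have h256 : (256 : K) ≠ 0 := by rw [show (256 : K) = 2 ^ 8 by norm_num]; exact pow_ne_zero 8 h2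
  have ht₁sq : t₁ ^ 2 = 8 * ζ - 3 * r7 := ht₁ ▸ one_add_mul_three_add_div_two_sq h2 hζ hr7
  have ht₂sq : t₂ ^ 2 = -(8 * ζ - 3 * r7) := by
    have ht₂ζ : t₂ = ζ * t₁ := by
      rw [ht₁, ht₂]
      linear_combination (-(3 + ζ * r7) / 2) * hζ
    rw [ht₂ζ, mul_pow, hζ, ht₁sq]
    ring
  have hs₁' : s₁ = 6 * r7 := by
    rw [hs₁, neg_pow_four_add_one_div_sq (v := 8 * ζ + 3 * r7)
      (by rw [ht₁sq]; linear_combination 64 * hζ - 9 * hr7), ht₁sq]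
    ring
  have hs₂' : s₂ = -6 * r7 := by
    rw [hs₂, neg_pow_four_add_one_div_sq (v := -(8 * ζ + 3 * r7))
      (by rw [ht₂sq]; linear_combination 64 * hζ - 9 * hr7), ht₂sq]
    ring
  have hs₁sq : s₁ ^ 2 = -252 := by rw [hs₁']; linear_combination 36 * hr7
  have hdisc : 4 - s₁ ^ 2 ≠ 0 := by rw [hs₁sq]; norm_num [h256]
  have hI₂' : I₂ = invariant (-s₁) := by rw [hI₂, hs₂', hs₁', neg_mul]; rfl
  refine ⟨hs₁', hs₂', by rw [hs₁', hs₂']; ring, by rw [hs₁', hs₂']; linear_combination -36 * hr7,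
    ?_, ?_⟩
  · rw [hI₁, hI₂', ← invariant, invariant_add_invariant_neg hdisc h2, hs₁sq,
      div_eq_div_iff (by norm_num [h256]) h16]
    norm_num
  · rw [hI₁, hI₂', ← invariant, invariant_mul_invariant_neg hdisc h2, hs₁sq, div_eq_iff h16]
    norm_num

/-- For `t₁ = (1+ζ)(3+ζr7)/2`, `t₂ = (-1+ζ)(3+ζr7)/2` (with
`ζ² = -1`, `r2² = 2`, `r7² = -7`), the values `sᵢ = -(tᵢ⁴+1)/tᵢ²` satisfy
`s₁ = 6r7`, `s₂ = -6r7`, so `s₁+s₂ = 0`, `s₁s₂ = 252`; and the invariants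
`Iᵢ = -(sᵢ-2)²/(4(sᵢ+2))` are the roots of `x² - (47/16)x + 16`:
`I₁+I₂ = 47/16` and `I₁·I₂ = 16`. -/
theorem stmt18 {K : Type*} [Field K] (h2 : (2 : K) ≠ 0)
    (ζ r2 r7 : K) (hζ : ζ ^ 2 = -1) (hr2 : r2 ^ 2 = 2) (hr7 : r7 ^ 2 = -7)
    (t₁ t₂ : K)
    (ht₁ : t₁ = (1 + ζ) * (3 + ζ * r7) / 2)
    (ht₂ : t₂ = (-1 + ζ) * (3 + ζ * r7) / 2)
    (s₁ s₂ : K)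
    (hs₁ : s₁ = -(t₁ ^ 4 + 1) / t₁ ^ 2) (hs₂ : s₂ = -(t₂ ^ 4 + 1) / t₂ ^ 2)
    (I₁ I₂ : K)
    (hI₁ : I₁ = -(s₁ - 2) ^ 2 / (4 * (s₁ + 2)))
    (hI₂ : I₂ = -(s₂ - 2) ^ 2 / (4 * (s₂ + 2))) :
    s₁ = 6 * r7 ∧ s₂ = -6 * r7 ∧ s₁ + s₂ = 0 ∧ s₁ * s₂ = 252 ∧
      I₁ + I₂ = 47 / 16 ∧ I₁ * I₂ = 16 :=
  stmt18_general h2 ζ r7 hζ hr7 t₁ t₂ ht₁ ht₂ s₁ s₂ hs₁ hs₂ I₁ I₂ hI₁ hI₂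
end

section
/- The substitutions I₁ = -32z(z+1)/(z-1)², I₂ = -32z(z-1)/(z+1)² give a rational parametrization of the curve I₁²I₂² - 3·2⁸·I₁I₂ + 2¹²·I₁ + 2¹²·I₂ = 0: for any z in a field of characteristic not 2 with z ≠ ±1, the pair (I₁,I₂) satisfies the equation; moreover swapping I₁ and I₂ corresponds to z ↦ -z. -/
/-- The substitutions `I₁ = -32z(z+1)/(z-1)²`,
`I₂ = -32z(z-1)/(z+1)²` parametrize the curve
`I₁²I₂² - 3·2⁸·I₁I₂ + 2¹²·I₁ + 2¹²·I₂ = 0` (for `z ≠ ±1`, char ≠ 2), and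
swapping `I₁` and `I₂` corresponds to `z ↦ -z`. -/
theorem stmt19 {K : Type*} [Field K] (h2 : (2 : K) ≠ 0)
    (z : K) (hz1 : z ≠ 1) (hz1' : z ≠ -1)
    (I₁ I₂ : K)
    (hI₁ : I₁ = -32 * z * (z + 1) / (z - 1) ^ 2)
    (hI₂ : I₂ = -32 * z * (z - 1) / (z + 1) ^ 2) :
    I₁ ^ 2 * I₂ ^ 2 - 3 * 2 ^ 8 * (I₁ * I₂) + 2 ^ 12 * I₁ + 2 ^ 12 * I₂ = 0 ∧
      -32 * (-z) * ((-z) + 1) / ((-z) - 1) ^ 2 = I₂ ∧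
      -32 * (-z) * ((-z) - 1) / ((-z) + 1) ^ 2 = I₁ := by
  have hm : (z - 1) ≠ 0 := sub_ne_zero.mpr hz1
  have hp : (z + 1) ≠ 0 := fun h => hz1' (by linear_combination h)
  have hm2 : (z - 1) ^ 2 ≠ 0 := pow_ne_zero 2 hm
  have hp2 : (z + 1) ^ 2 ≠ 0 := pow_ne_zero 2 hp
  have hnm : (-z - 1) ^ 2 ≠ 0 := pow_ne_zero 2 (fun h => hp (by linear_combination -h))
  have hnp : (-z + 1) ^ 2 ≠ 0 := pow_ne_zero 2 (fun h => hm (by linear_combination -h))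
  have hA : I₁ * (z - 1) ^ 2 = -32 * z * (z + 1) := by
    rw [hI₁, div_mul_cancel₀ _ hm2]
  have hB : I₂ * (z + 1) ^ 2 = -32 * z * (z - 1) := by
    rw [hI₂, div_mul_cancel₀ _ hp2]
  refine ⟨?_, ?_, ?_⟩
  · have hd : ((z - 1) ^ 2 * (z - 1) ^ 2 * ((z + 1) ^ 2 * (z + 1) ^ 2)) ≠ 0 :=
      mul_ne_zero (mul_ne_zero hm2 hm2) (mul_ne_zero hp2 hp2)
    apply mul_left_cancel₀ hd
    rw [mul_zero]
    linear_combination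
      ((z + 1) ^ 4 * I₂ ^ 2 * (I₁ * (z - 1) ^ 2 + (-32 * z * (z + 1)))
        - 768 * (z - 1) ^ 2 * (z + 1) ^ 4 * I₂ + 4096 * (z - 1) ^ 2 * (z + 1) ^ 4) * hA +
      ((-32 * z * (z + 1)) ^ 2 * (I₂ * (z + 1) ^ 2 + (-32 * z * (z - 1)))
        - 768 * (-32 * z * (z + 1)) * (z - 1) ^ 2 * (z + 1) ^ 2
        + 4096 * (z - 1) ^ 4 * (z + 1) ^ 2) * hB
  · rw [hI₂, div_eq_div_iff hnm hp2]; ring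
  · rw [hI₁, div_eq_div_iff hnp hm2]; ring
end
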